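/- If ((φ : A₀ → A₁), (ν₀, ν₁)) is an S̄-algebra, then φ is an S-derivation from (A₀, ν₀) to the module (A₁, α_{ν₁}): that is, φ ∘ ν₀ = α_{ν₁} ∘ (ν₀ ⊗ φ) ∘ d_{A₀}. -/

import Mathlib

open CategoryTheory MonoidalCategory

universe v u

/-- A category enriched in commutative monoids (an "additive category" without
biproducts or negatives), with composition preserving sums and zeros. -/
class AdditiveHoms (C : Type u) [Category.{v} C] where
  homMon : ∀ X Y : C, AddCommMonoid (X ⟶ Y) := by infer_instance
  add_comp : ∀ {X Y Z : C} (f g : X ⟶ Y) (h : Y ⟶ Z), (f + g) ≫ h = f ≫ h + g ≫ h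
  comp_add : ∀ {X Y Z : C} (f : X ⟶ Y) (g h : Y ⟶ Z), f ≫ (g + h) = f ≫ g + f ≫ h
  zero_comp' : ∀ {X Y Z : C} (h : Y ⟶ Z), (0 : X ⟶ Y) ≫ h = 0
  comp_zero' : ∀ {X Y Z : C} (f : X ⟶ Y), f ≫ (0 : Y ⟶ Z) = 0

attribute [instance] AdditiveHoms.homMon

/-- An additive symmetric monoidal category: the tensor preserves the additive
structure in each variable. -/
class AdditiveMonoidal (C : Type u) [Category.{v} C] [MonoidalCategory C] extends
    AdditiveHoms C where
  tensor_add : ∀ {W X Y Z : C} (f : W ⟶ X) (g h : Y ⟶ Z), f ⊗ₘ (g + h) = f ⊗ₘ g + f ⊗ₘ h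
  add_tensor : ∀ {W X Y Z : C} (f g : W ⟶ X) (h : Y ⟶ Z), (f + g) ⊗ₘ h = f ⊗ₘ h + g ⊗ₘ h
  tensor_zero : ∀ {W X Y Z : C} (f : W ⟶ X), f ⊗ₘ (0 : Y ⟶ Z) = 0
  zero_tensor : ∀ {W X Y Z : C} (f : Y ⟶ Z), (0 : W ⟶ X) ⊗ₘ f = 0

/-- A differential modality on an additive symmetric monoidal category: an algebra
modality `(S, μ, η, m, u)` together with a deriving transformation `d` satisfying
the constant rule [D.1], Leibniz rule [D.2], linear rule [D.3], chain rule [D.4]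
and interchange rule [D.5]. -/
structure DiffModality (C : Type u) [Category.{v} C] [MonoidalCategory C]
    [SymmetricCategory C] [AdditiveMonoidal C] where
  S : C ⥤ C
  η : ∀ A : C, A ⟶ S.obj A
  μ : ∀ A : C, S.obj (S.obj A) ⟶ S.obj A
  η_natural : ∀ {A B : C} (f : A ⟶ B), f ≫ η B = η A ≫ S.map f
  μ_natural : ∀ {A B : C} (f : A ⟶ B), S.map (S.map f) ≫ μ B = μ A ≫ S.map f
  left_unit : ∀ A : C, η (S.obj A) ≫ μ A = 𝟙 (S.obj A)
  right_unit : ∀ A : C, S.map (η A) ≫ μ A = 𝟙 (S.obj A)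
  μ_assoc : ∀ A : C, S.map (μ A) ≫ μ A = μ (S.obj A) ≫ μ A
  m : ∀ A : C, S.obj A ⊗ S.obj A ⟶ S.obj A
  u : ∀ A : C, 𝟙_ C ⟶ S.obj A
  m_natural : ∀ {A B : C} (f : A ⟶ B), (S.map f ⊗ₘ S.map f) ≫ m B = m A ≫ S.map f
  u_natural : ∀ {A B : C} (f : A ⟶ B), u A ≫ S.map f = u B
  m_assoc : ∀ A : C, (m A ⊗ₘ 𝟙 (S.obj A)) ≫ m A =
      (α_ (S.obj A) (S.obj A) (S.obj A)).hom ≫ (𝟙 (S.obj A) ⊗ₘ m A) ≫ m A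
  m_unit : ∀ A : C, (λ_ (S.obj A)).inv ≫ (u A ⊗ₘ 𝟙 (S.obj A)) ≫ m A = 𝟙 (S.obj A)
  m_comm : ∀ A : C, (β_ (S.obj A) (S.obj A)).hom ≫ m A = m A
  μ_mul : ∀ A : C, (μ A ⊗ₘ μ A) ≫ m A = m (S.obj A) ≫ μ A
  μ_unit : ∀ A : C, u (S.obj A) ≫ μ A = u A
  d : ∀ A : C, S.obj A ⟶ S.obj A ⊗ A
  d_natural : ∀ {A B : C} (f : A ⟶ B), S.map f ≫ d B = d A ≫ (S.map f ⊗ₘ f)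
  d1 : ∀ A : C, u A ≫ d A = 0
  d2 : ∀ A : C, m A ≫ d A =
      (𝟙 (S.obj A) ⊗ₘ d A) ≫ (α_ (S.obj A) (S.obj A) A).inv ≫ (m A ⊗ₘ 𝟙 A)
      + (d A ⊗ₘ 𝟙 (S.obj A)) ≫ (α_ (S.obj A) A (S.obj A)).hom ≫
          (𝟙 (S.obj A) ⊗ₘ (β_ A (S.obj A)).hom) ≫ (α_ (S.obj A) (S.obj A) A).inv ≫
          (m A ⊗ₘ 𝟙 A)
  d3 : ∀ A : C, η A ≫ d A = (λ_ A).inv ≫ (u A ⊗ₘ 𝟙 A)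
  d4 : ∀ A : C, μ A ≫ d A =
      d (S.obj A) ≫ (μ A ⊗ₘ d A) ≫ (α_ (S.obj A) (S.obj A) A).inv ≫ (m A ⊗ₘ 𝟙 A)
  d5 : ∀ A : C, d A ≫ (d A ⊗ₘ 𝟙 A) =
      d A ≫ (d A ⊗ₘ 𝟙 A) ≫ (α_ (S.obj A) A A).hom ≫
        (𝟙 (S.obj A) ⊗ₘ (β_ A A).hom) ≫ (α_ (S.obj A) A A).inv

variable {C : Type u} [Category.{v} C] [MonoidalCategory C] [SymmetricCategory C]
  [AdditiveMonoidal C]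

/-- The lift of the differential modality to arrows: `S̄(φ) = (1 ⊗ φ) ∘ d`. -/
def Sbar (D : DiffModality C) {A₀ A₁ : C} (φ : A₀ ⟶ A₁) :
    D.S.obj A₀ ⟶ D.S.obj A₀ ⊗ A₁ :=
  D.d A₀ ≫ (𝟙 (D.S.obj A₀) ⊗ₘ φ)

/-- The right component of the lifted monad unit `η̄`: `(u ⊗ 1) ∘ λ⁻¹`. -/
def etaR (D : DiffModality C) (A₀ A₁ : C) : A₁ ⟶ D.S.obj A₀ ⊗ A₁ :=
  (λ_ A₁).inv ≫ (D.u A₀ ⊗ₘ 𝟙 A₁)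

/-- The right component of the lifted monad multiplication `μ̄`:
`(m ⊗ 1) ∘ (μ ⊗ 1 ⊗ 1)`. -/
def muR (D : DiffModality C) (A₀ A₁ : C) :
    D.S.obj (D.S.obj A₀) ⊗ (D.S.obj A₀ ⊗ A₁) ⟶ D.S.obj A₀ ⊗ A₁ :=
  (D.μ A₀ ⊗ₘ 𝟙 (D.S.obj A₀ ⊗ A₁)) ≫ (α_ (D.S.obj A₀) (D.S.obj A₀) A₁).inv ≫
    (D.m A₀ ⊗ₘ 𝟙 A₁)

/-- An algebra of the lifted monad `S̄` on the arrow category, on the arrow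
`φ : A₀ ⟶ A₁`: maps `ν₀ : S(A₀) ⟶ A₀` and `ν₁ : S(A₀) ⊗ A₁ ⟶ A₁` such that
`(ν₀, ν₁) : S̄(φ) ⟶ φ` is an arrow-category map satisfying the unit and
multiplication algebra laws for `S̄`. -/
structure SbarAlgebra (D : DiffModality C) {A₀ A₁ : C} (φ : A₀ ⟶ A₁) where
  ν₀ : D.S.obj A₀ ⟶ A₀
  ν₁ : D.S.obj A₀ ⊗ A₁ ⟶ A₁
  square : Sbar D φ ≫ ν₁ = ν₀ ≫ φ
  unit₀ : D.η A₀ ≫ ν₀ = 𝟙 A₀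
  unit₁ : etaR D A₀ A₁ ≫ ν₁ = 𝟙 A₁
  mul₀ : D.S.map ν₀ ≫ ν₀ = D.μ A₀ ≫ ν₀
  mul₁ : (D.S.map ν₀ ⊗ₘ ν₁) ≫ ν₁ = muR D A₀ A₁ ≫ ν₁

/-- The multiplication `m` also has a right unit, via commutativity. -/
lemma m_unit_right (D : DiffModality C) (A : C) :
    (ρ_ (D.S.obj A)).inv ≫ (𝟙 (D.S.obj A) ⊗ₘ D.u A) ≫ D.m A = 𝟙 (D.S.obj A) := by
  have hnat : (𝟙 (D.S.obj A) ⊗ₘ D.u A) ≫ (β_ (D.S.obj A) (D.S.obj A)).hom =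
      (β_ (D.S.obj A) (𝟙_ C)).hom ≫ (D.u A ⊗ₘ 𝟙 (D.S.obj A)) :=
    BraidedCategory.braiding_naturality (𝟙 (D.S.obj A)) (D.u A)
  have hb : (ρ_ (D.S.obj A)).inv ≫ (β_ (D.S.obj A) (𝟙_ C)).hom =
      (λ_ (D.S.obj A)).inv := by simp
  calc (ρ_ (D.S.obj A)).inv ≫ (𝟙 (D.S.obj A) ⊗ₘ D.u A) ≫ D.m A
      = (ρ_ (D.S.obj A)).inv ≫ (𝟙 (D.S.obj A) ⊗ₘ D.u A) ≫
          (β_ (D.S.obj A) (D.S.obj A)).hom ≫ D.m A := by rw [D.m_comm]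
    _ = ((ρ_ (D.S.obj A)).inv ≫ (β_ (D.S.obj A) (𝟙_ C)).hom) ≫
          (D.u A ⊗ₘ 𝟙 (D.S.obj A)) ≫ D.m A := by
        rw [← Category.assoc (𝟙 (D.S.obj A) ⊗ₘ D.u A), hnat]
        simp only [Category.assoc]
    _ = (λ_ (D.S.obj A)).inv ≫ (D.u A ⊗ₘ 𝟙 (D.S.obj A)) ≫ D.m A := by rw [hb]
    _ = 𝟙 (D.S.obj A) := D.m_unit A

/-- The action `ν₁` is unital for `η ∘ ν₀`. -/
lemma nu_eta_act (D : DiffModality C) {A₀ A₁ : C}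
    (φ : A₀ ⟶ A₁) (alg : SbarAlgebra D φ) :
    ((alg.ν₀ ≫ D.η A₀) ⊗ₘ 𝟙 A₁) ≫ alg.ν₁ = alg.ν₁ := by
  have h := congrArg (fun f => (D.η (D.S.obj A₀) ⊗ₘ etaR D A₀ A₁) ≫ f) alg.mul₁
  beta_reduce at h
  have lhs : (D.η (D.S.obj A₀) ⊗ₘ etaR D A₀ A₁) ≫ (D.S.map alg.ν₀ ⊗ₘ alg.ν₁) ≫ alg.ν₁
      = ((alg.ν₀ ≫ D.η A₀) ⊗ₘ 𝟙 A₁) ≫ alg.ν₁ := by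
    rw [← Category.assoc, MonoidalCategory.tensorHom_comp_tensorHom, alg.unit₁,
      ← D.η_natural alg.ν₀]
  have step1 : (D.η (D.S.obj A₀) ⊗ₘ etaR D A₀ A₁) ≫ muR D A₀ A₁ =
      (𝟙 (D.S.obj A₀) ⊗ₘ etaR D A₀ A₁) ≫ (α_ (D.S.obj A₀) (D.S.obj A₀) A₁).inv ≫
        (D.m A₀ ⊗ₘ 𝟙 A₁) := by
    unfold muR
    rw [← Category.assoc, MonoidalCategory.tensorHom_comp_tensorHom, D.left_unit]
    simp
  have coh : (𝟙 (D.S.obj A₀) ⊗ₘ (λ_ A₁).inv) ≫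
      (α_ (D.S.obj A₀) (𝟙_ C) A₁).inv = ((ρ_ (D.S.obj A₀)).inv ⊗ₘ 𝟙 A₁) := by
    monoidal_coherence
  have step2 : (𝟙 (D.S.obj A₀) ⊗ₘ etaR D A₀ A₁) ≫
      (α_ (D.S.obj A₀) (D.S.obj A₀) A₁).inv ≫ (D.m A₀ ⊗ₘ 𝟙 A₁) =
      𝟙 (D.S.obj A₀ ⊗ A₁) := by
    unfold etaR
    calc (𝟙 (D.S.obj A₀) ⊗ₘ ((λ_ A₁).inv ≫ (D.u A₀ ⊗ₘ 𝟙 A₁))) ≫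
          (α_ (D.S.obj A₀) (D.S.obj A₀) A₁).inv ≫ (D.m A₀ ⊗ₘ 𝟙 A₁)
        = (𝟙 (D.S.obj A₀) ⊗ₘ (λ_ A₁).inv) ≫ (𝟙 (D.S.obj A₀) ⊗ₘ (D.u A₀ ⊗ₘ 𝟙 A₁)) ≫
            (α_ (D.S.obj A₀) (D.S.obj A₀) A₁).inv ≫ (D.m A₀ ⊗ₘ 𝟙 A₁) := by
          rw [MonoidalCategory.id_tensor_comp]
          simp only [Category.assoc]
      _ = (𝟙 (D.S.obj A₀) ⊗ₘ (λ_ A₁).inv) ≫ (α_ (D.S.obj A₀) (𝟙_ C) A₁).inv ≫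
            ((𝟙 (D.S.obj A₀) ⊗ₘ D.u A₀) ⊗ₘ 𝟙 A₁) ≫ (D.m A₀ ⊗ₘ 𝟙 A₁) := by
          rw [← Category.assoc (𝟙 (D.S.obj A₀) ⊗ₘ (D.u A₀ ⊗ₘ 𝟙 A₁)),
            MonoidalCategory.associator_inv_naturality]
          simp only [Category.assoc]
      _ = ((ρ_ (D.S.obj A₀)).inv ⊗ₘ 𝟙 A₁) ≫
            ((𝟙 (D.S.obj A₀) ⊗ₘ D.u A₀) ⊗ₘ 𝟙 A₁) ≫ (D.m A₀ ⊗ₘ 𝟙 A₁) := by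
          rw [← Category.assoc, coh]
      _ = (((ρ_ (D.S.obj A₀)).inv ≫ (𝟙 (D.S.obj A₀) ⊗ₘ D.u A₀) ≫ D.m A₀) ⊗ₘ 𝟙 A₁) := by
          simp only [← MonoidalCategory.comp_tensor_id, Category.assoc]
      _ = 𝟙 (D.S.obj A₀ ⊗ A₁) := by
          rw [m_unit_right]
          exact MonoidalCategory.id_tensorHom_id _ _
  have step2' := congrArg (fun f => f ≫ alg.ν₁) step2
  simp only [Category.assoc, Category.id_comp] at step2'
  have rhs : (D.η (D.S.obj A₀) ⊗ₘ etaR D A₀ A₁) ≫ muR D A₀ A₁ ≫ alg.ν₁ = alg.ν₁ := by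
    rw [← Category.assoc, step1]
    simp only [Category.assoc]
    exact step2' 
  rw [lhs, rhs] at h
  exact h

/-- For an `S̄`-algebra `((φ : A₀ → A₁), (ν₀, ν₁))`, the arrow
`φ` is an `S`-derivation from `(A₀, ν₀)` to `(A₁, α_{ν₁})`:
`φ ∘ ν₀ = α_{ν₁} ∘ (ν₀ ⊗ₘ φ) ∘ d`. -/
theorem sbarAlgebra_is_derivation (D : DiffModality C) {A₀ A₁ : C}
    (φ : A₀ ⟶ A₁) (alg : SbarAlgebra D φ) :
    alg.ν₀ ≫ φ =
      D.d A₀ ≫ (alg.ν₀ ⊗ₘ φ) ≫ (D.η A₀ ⊗ₘ 𝟙 A₁) ≫ alg.ν₁ := by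
  have h1 : (alg.ν₀ ⊗ₘ φ) ≫ (D.η A₀ ⊗ₘ 𝟙 A₁) =
      (𝟙 (D.S.obj A₀) ⊗ₘ φ) ≫ ((alg.ν₀ ≫ D.η A₀) ⊗ₘ 𝟙 A₁) := by
    rw [MonoidalCategory.tensorHom_comp_tensorHom, MonoidalCategory.tensorHom_comp_tensorHom]
    simp
  conv_rhs => rw [← Category.assoc (alg.ν₀ ⊗ₘ φ), h1]
  rw [Category.assoc, nu_eta_act D φ alg, ← Category.assoc,
    show D.d A₀ ≫ (𝟙 (D.S.obj A₀) ⊗ₘ φ) = Sbar D φ from rfl, alg.square]
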